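/- Let R be a commutative ring, M a finitely generated projective R-module, and w ∈ Sym^d(M) for d ≥ 1. Let γ = (1/d)·dw ∈ M ⊗ Sym^{d-1}(M) be (1/d times) the image of w under the de Rham-type differential Sym^d(M) → M ⊗ Sym^{d-1}(M) (in coordinates, w ↦ Σ_i dx_i ⊗ ∂w/∂x_i). On the complex F = Λ^•(M) ⊗_R Sym(M), define δ = d_Koszul + (γ ∧ −), where d_Koszul is contraction with the tautological element of M* ⊗ M composed with multiplication in Sym(M), and γ ∧ − is exterior multiplication by the M-component of γ combined with Sym-multiplication by the Sym^{d-1}(M)-component. Then δ∘δ equals multiplication by w (viewing w as an element of Sym(M) acting on the Sym factor). -/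

import Mathlib

/-!
Write `δ = ∑ᵢ Pᵢ` with `Pᵢ = xᵢ · ι(dxᵢ) + γᵢ · (dxᵢ ∧ −)`, where `γᵢ = (1/d) ∂w/∂xᵢ`.
Each `Pᵢ` only toggles the generator `dxᵢ`, so for `i ≠ j` the operators `Pᵢ` and `Pⱼ`
anticommute (moving `dxᵢ` past `dxⱼ` costs a sign), while `Pᵢ² = xᵢ γᵢ` since contracting
and wedging with the same `dxᵢ` in either order is the identity. Hence
`δ² = ∑ᵢ xᵢ γᵢ = (1/d) ∑ᵢ xᵢ ∂w/∂xᵢ = w` by Euler's identity.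
-/

open MvPolynomial

/-- The underlying module of the Koszul factorization `F = Λ•(M) ⊗ Sym(M)` for `M`
free with basis `x₁,...,xₙ`: a basis element `dx_S ⊗ f` is encoded as the finitely
supported function sending the finset `S` to the polynomial `f`. -/
abbrev KoszulMod (k : Type*) [CommRing k] (n : ℕ) :=
  Finset (Fin n) →₀ MvPolynomial (Fin n) k

/-- The sign `(−1)^{#{j ∈ S : j < i}}` occurring when removing/inserting `dxᵢ`
from/into `dx_S`. -/
def koszulSign {n : ℕ} (S : Finset (Fin n)) (i : Fin n) : ℤ :=
  (-1) ^ (S.filter (fun j => j < i)).card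

/-- The Koszul differential `d_Koszul`: contraction with the tautological (Euler)
element of `M* ⊗ M` composed with multiplication in `Sym(M)`; in coordinates
`dx_{i₁}∧⋯∧dx_{i_m} ⊗ f ↦ ∑_j (−1)^{j+1} dx_{i₁}∧⋯∧dx̂_{i_j}∧⋯ ⊗ x_{i_j}·f`. -/
noncomputable def dKoszul {k : Type*} [CommRing k] {n : ℕ}
    (b : KoszulMod k n) : KoszulMod k n :=
  b.sum fun S f => ∑ i ∈ S, koszulSign S i • Finsupp.single (S.erase i) (X i * f)

/-- Exterior multiplication by `γ = (1/d)·dw ∈ M ⊗ Sym^{d−1}(M)`: in coordinates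
`β ⊗ f ↦ ∑ᵢ dxᵢ ∧ β ⊗ (1/d)(∂w/∂xᵢ)·f`. -/
noncomputable def gammaWedge {k : Type*} [Field k] {n : ℕ} (d : ℕ)
    (w : MvPolynomial (Fin n) k) (b : KoszulMod k n) : KoszulMod k n :=
  b.sum fun S f => ∑ i : Fin n,
    if i ∈ S then 0
    else koszulSign S i •
      Finsupp.single (insert i S) (C ((d : k)⁻¹) * pderiv i w * f)

namespace Finset

variable {α : Type*} [DecidableEq α] {s : Finset α} {a : α}

theorem symmDiff_singleton_of_mem (h : a ∈ s) : symmDiff s {a} = s.erase a := by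
  ext b; by_cases hb : b = a <;> simp [mem_symmDiff, hb, h]

theorem symmDiff_singleton_of_notMem (h : a ∉ s) : symmDiff s {a} = insert a s := by
  ext b; by_cases hb : b = a <;> simp [mem_symmDiff, hb, h]

theorem mem_symmDiff_singleton_self : a ∈ symmDiff s {a} ↔ a ∉ s := by
  simp [mem_symmDiff]

theorem mem_symmDiff_singleton_of_ne {b : α} (h : b ≠ a) : b ∈ symmDiff s {a} ↔ b ∈ s := by
  simp [mem_symmDiff, h]

theorem sum_mul_sum_self_of_anticomm {ι R : Type*} [Ring R] (s : Finset ι) (P : ι → R)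
    (h : ∀ i ∈ s, ∀ j ∈ s, i ≠ j → P i * P j + P j * P i = 0) :
    (∑ i ∈ s, P i) * (∑ i ∈ s, P i) = ∑ i ∈ s, P i * P i := by
  classical
  induction s using Finset.induction_on with
  | empty => simp
  | insert x s hx ih =>
    have hs : ∀ i ∈ s, ∀ j ∈ s, i ≠ j → P i * P j + P j * P i = 0 := fun i hi j hj =>
      h i (mem_insert_of_mem hi) j (mem_insert_of_mem hj)
    have hxs : P x * ∑ j ∈ s, P j + (∑ j ∈ s, P j) * P x = 0 := by
      rw [mul_sum, sum_mul, ← sum_add_distrib]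
      exact sum_eq_zero fun j hj =>
        h x (mem_insert_self x s) j (mem_insert_of_mem hj) (ne_of_mem_of_not_mem hj hx).symm
    rw [sum_insert hx, sum_insert hx, ← ih hs]
    calc (P x + ∑ j ∈ s, P j) * (P x + ∑ j ∈ s, P j)
        = P x * P x + (P x * ∑ j ∈ s, P j + (∑ j ∈ s, P j) * P x)
          + (∑ j ∈ s, P j) * (∑ j ∈ s, P j) := by noncomm_ring
      _ = _ := by rw [hxs, add_zero]

end Finset

section KoszulSign

variable {n : ℕ}

theorem koszulSign_mul_self (S : Finset (Fin n)) (i : Fin n) :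
    koszulSign S i * koszulSign S i = 1 := by
  rw [koszulSign, ← pow_add]
  exact Even.neg_one_pow ⟨_, rfl⟩

theorem koszulSign_erase_of_mem {S : Finset (Fin n)} {j : Fin n} (hj : j ∈ S) (i : Fin n) :
    koszulSign (S.erase j) i = (if j < i then -1 else 1) * koszulSign S i := by
  unfold koszulSign
  rw [Finset.filter_erase]
  split_ifs with h
  · have hjf : j ∈ S.filter (· < i) := Finset.mem_filter.2 ⟨hj, h⟩
    rw [← Finset.card_erase_add_one hjf, pow_succ]
    ring
  · rw [Finset.erase_eq_of_notMem (by simp [h]), one_mul]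

theorem koszulSign_insert_of_notMem {S : Finset (Fin n)} {j : Fin n} (hj : j ∉ S) (i : Fin n) :
    koszulSign (insert j S) i = (if j < i then -1 else 1) * koszulSign S i := by
  unfold koszulSign
  rw [Finset.filter_insert]
  split_ifs with h
  · rw [Finset.card_insert_of_notMem (by simp [hj]), pow_succ]
    ring
  · rw [one_mul]

theorem koszulSign_symmDiff_singleton (S : Finset (Fin n)) (i j : Fin n) :
    koszulSign (symmDiff S {j}) i = (if j < i then -1 else 1) * koszulSign S i := by
  by_cases hj : j ∈ S
  · rw [Finset.symmDiff_singleton_of_mem hj, koszulSign_erase_of_mem hj]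
  · rw [Finset.symmDiff_singleton_of_notMem hj, koszulSign_insert_of_notMem hj]

theorem koszulSign_symmDiff_anticomm (S : Finset (Fin n)) {i j : Fin n} (hij : i ≠ j) :
    koszulSign (symmDiff S {j}) i * koszulSign S j
      + koszulSign (symmDiff S {i}) j * koszulSign S i = 0 := by
  rw [koszulSign_symmDiff_singleton, koszulSign_symmDiff_singleton]
  rcases lt_or_gt_of_ne hij with h | h
  · rw [if_neg (asymm h), if_pos h]; ring
  · rw [if_pos h, if_neg (asymm h)]; ring

end KoszulSign

section KoszulDifferential

variable {A : Type*} [CommRing A] {n : ℕ}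

/-- `symmDiff S {i}` toggles `dxᵢ`: contraction with weight `a` if `i ∈ S`,
wedge with weight `b` if not. -/
noncomputable def koszulTerm (a b : A) (i : Fin n) : Module.End A (Finset (Fin n) →₀ A) :=
  Finsupp.lsum A fun S =>
    ((koszulSign S i : A) * if i ∈ S then a else b) • Finsupp.lsingle (symmDiff S {i})

theorem koszulTerm_single (a b : A) (i : Fin n) (S : Finset (Fin n)) (f : A) :
    koszulTerm a b i (Finsupp.single S f) =
      Finsupp.single (symmDiff S {i}) ((koszulSign S i : A) * (if i ∈ S then a else b) * f) := by
  rw [koszulTerm, Finsupp.lsum_single, LinearMap.smul_apply, Finsupp.lsingle_apply,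
    Finsupp.smul_single, smul_eq_mul]

theorem koszulTerm_mul_self (a b : A) (i : Fin n) :
    koszulTerm a b i * koszulTerm a b i = (a * b) • 1 := by
  refine Finsupp.lhom_ext fun S f => ?_
  rw [Module.End.mul_apply, koszulTerm_single, koszulTerm_single, symmDiff_symmDiff_cancel_right,
    koszulSign_symmDiff_singleton, if_neg (lt_irrefl i), one_mul, LinearMap.smul_apply,
    Module.End.one_apply, Finsupp.smul_single]
  congr 1
  have hσ : (koszulSign S i : A) * koszulSign S i = 1 := by
    rw [← Int.cast_mul, koszulSign_mul_self, Int.cast_one]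
  by_cases hi : i ∈ S <;>
  · simp only [Finset.mem_symmDiff_singleton_self, hi, not_true_eq_false, not_false_eq_true,
      if_true, if_false, smul_eq_mul]
    linear_combination (a * b * f) * hσ

theorem koszulTerm_anticomm (a b a' b' : A) {i j : Fin n} (hij : i ≠ j) :
    koszulTerm a b i * koszulTerm a' b' j + koszulTerm a' b' j * koszulTerm a b i = 0 := by
  refine Finsupp.lhom_ext fun S f => ?_
  rw [LinearMap.add_apply, Module.End.mul_apply, Module.End.mul_apply, koszulTerm_single,
    koszulTerm_single, koszulTerm_single, koszulTerm_single, symmDiff_right_comm]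
  simp only [Finset.mem_symmDiff_singleton_of_ne hij, Finset.mem_symmDiff_singleton_of_ne hij.symm]
  rw [← Finsupp.single_add, LinearMap.zero_apply, Finsupp.single_eq_zero]
  have hσ : (koszulSign (symmDiff S {j}) i : A) * koszulSign S j
      + koszulSign (symmDiff S {i}) j * koszulSign S i = 0 := by
    exact_mod_cast congrArg (Int.cast : ℤ → A) (koszulSign_symmDiff_anticomm S hij)
  linear_combination ((if i ∈ S then a else b) * (if j ∈ S then a' else b') * f) * hσ

noncomputable def koszulDifferential (a b : Fin n → A) : Module.End A (Finset (Fin n) →₀ A) :=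
  ∑ i, koszulTerm (a i) (b i) i

theorem koszulDifferential_mul_self (a b : Fin n → A) :
    koszulDifferential a b * koszulDifferential a b = (∑ i, a i * b i) • 1 := by
  rw [koszulDifferential, Finset.sum_mul_sum_self_of_anticomm Finset.univ
    (fun i => koszulTerm (a i) (b i) i) fun i _ j _ hij => koszulTerm_anticomm _ _ _ _ hij,
    Finset.sum_smul]
  exact Finset.sum_congr rfl fun i _ => koszulTerm_mul_self _ _ i

end KoszulDifferential

theorem dKoszul_add_gammaWedge {k : Type*} [Field k] {n : ℕ} (d : ℕ)
    (w : MvPolynomial (Fin n) k) (v : KoszulMod k n) :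
    dKoszul v + gammaWedge d w v =
      koszulDifferential X (fun i => C (d : k)⁻¹ * pderiv i w) v := by
  rw [dKoszul, gammaWedge, ← Finsupp.sum_add, koszulDifferential, LinearMap.sum_apply]
  simp only [koszulTerm, Finsupp.lsum_apply]
  unfold Finsupp.sum
  rw [Finset.sum_comm]
  refine Finset.sum_congr rfl fun S _ => ?_
  beta_reduce
  rw [← Fintype.sum_ite_mem, ← Finset.sum_add_distrib]
  refine Finset.sum_congr rfl fun i _ => ?_
  by_cases hi : i ∈ S
  · simp only [hi, if_true, add_zero, Finset.symmDiff_singleton_of_mem hi, LinearMap.smul_apply,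
      Finsupp.lsingle_apply, Finsupp.smul_single, smul_eq_mul, zsmul_eq_mul, mul_assoc]
  · simp only [hi, if_false, zero_add, Finset.symmDiff_singleton_of_notMem hi,
      LinearMap.smul_apply, Finsupp.lsingle_apply, Finsupp.smul_single, smul_eq_mul,
      zsmul_eq_mul, mul_assoc]

/-- **The Koszul factorization squares to `w`.**  Over a field of characteristic `0`,
for `w` homogeneous of degree `d ≥ 1`, the odd operator
`δ = d_Koszul + (γ ∧ −)` on `Λ•(M) ⊗ Sym(M)` satisfies `δ∘δ = w·id`. -/
theorem stmt_3 {k : Type*} [Field k] [CharZero k] {n d : ℕ} (hd : 1 ≤ d)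
    (w : MvPolynomial (Fin n) k) (hw : w.IsHomogeneous d) :
    ∀ b : KoszulMod k n,
      (fun c => dKoszul c + gammaWedge d w c)
        ((fun c => dKoszul c + gammaWedge d w c) b) = w • b := by
  intro b
  have euler : ∑ i, X i * (C (d : k)⁻¹ * pderiv i w) = w := by
    calc ∑ i, X i * (C (d : k)⁻¹ * pderiv i w)
        = C (d : k)⁻¹ * ∑ i, X i * pderiv i w := by
          rw [Finset.mul_sum]; exact Finset.sum_congr rfl fun i _ => mul_left_comm _ _ _
      _ = w := by
          rw [hw.sum_X_mul_pderiv, nsmul_eq_mul, ← mul_assoc, ← map_natCast C, ← C_mul,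
            inv_mul_cancel₀ (Nat.cast_ne_zero.2 (by omega)), C_1, one_mul]
  simp only [dKoszul_add_gammaWedge]
  rw [← Module.End.mul_apply, koszulDifferential_mul_self, euler, LinearMap.smul_apply,
    Module.End.one_apply]
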